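/- Let 𝕂 be ℝ or ℂ, let λ ∈ 𝕂 with 0 < |λ| < 1, and let A_1 = [[1,0],[0,−1]], A_2 = [[0,λ],[λ,0]]. Then the pair 𝒜 = (A_1, A_2) is irreducible with ϱ(𝒜) = 1 and has the unbounded agreements property and the finiteness property; the identity matrix belongs to the limit semigroup 𝒮(𝒜), so 𝒜 does not have the rank one property; and for every p ≥ 1 the norm ‖(x,y)ᵀ‖_p = (|x|^p + |y|^p)^{1/p} is a Barabanov norm for 𝒜, so 𝒜 has Barabanov norms that are not proportional to each other. -/

import Mathlib

open Filter Topology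

noncomputable section

namespace JSRPaper

variable {𝕂 : Type*} [RCLike 𝕂] {ι : Type*} [Fintype ι] [DecidableEq ι] {r : ℕ}

/-- The Euclidean operator norm of a matrix, i.e. the operator norm induced by the
Euclidean norm on `𝕂^ι`. -/
noncomputable def eNorm (A : Matrix ι ι 𝕂) : ℝ :=
  ‖Matrix.toEuclideanCLM (𝕜 := 𝕂) A‖

/-- The product `A_{i n} ⋯ A_{i 1}` associated to the word `i : Fin n → Fin r`. -/
noncomputable def wordProd (A : Fin r → Matrix ι ι 𝕂) {n : ℕ} (i : Fin n → Fin r) :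
    Matrix ι ι 𝕂 :=
  ((List.ofFn fun k => A (i k)).reverse).prod

/-- The joint spectral radius of the tuple `A`, expressed via the standard
characterisation `ϱ(𝒜) = inf_n max_{|i| = n} ‖A_{i_n} ⋯ A_{i_1}‖^{1/n}`
(the infimum equals the limit). -/
noncomputable def jsr (A : Fin r → Matrix ι ι 𝕂) : ℝ :=
  ⨅ n : ℕ+, (⨆ i : Fin (n : ℕ) → Fin r, eNorm (wordProd A i)) ^ ((n : ℝ)⁻¹)

/-- The spectral radius of a matrix, via Gelfand's formula
`ρ(A) = inf_k ‖A^k‖^{1/k}` (the infimum equals the limit). -/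
noncomputable def specRad (A : Matrix ι ι 𝕂) : ℝ :=
  ⨅ k : ℕ+, eNorm (A ^ (k : ℕ)) ^ (((k : ℕ) : ℝ)⁻¹)

/-- `N` is a norm on `𝕂^ι`. -/
def IsNorm (N : EuclideanSpace 𝕂 ι → ℝ) : Prop :=
  (∀ v, N v = 0 ↔ v = 0) ∧ (∀ (c : 𝕂) (v), N (c • v) = ‖c‖ * N v) ∧
    ∀ u v, N (u + v) ≤ N u + N v

/-- The operator norm of the matrix `A` induced by the norm `N` on `𝕂^ι`. -/
noncomputable def opNormWrt (N : EuclideanSpace 𝕂 ι → ℝ) (A : Matrix ι ι 𝕂) : ℝ :=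
  sSup {x : ℝ | ∃ v, N v ≤ 1 ∧ x = N (Matrix.toEuclideanCLM (𝕜 := 𝕂) A v)}

/-- `N` is a Barabanov norm for the tuple `A` : it is a norm and
`ϱ(𝒜) ‖v‖ = max_i ‖A_i v‖` for every `v`. -/
def IsBarabanov (A : Fin r → Matrix ι ι 𝕂) (N : EuclideanSpace 𝕂 ι → ℝ) : Prop :=
  IsNorm N ∧ ∀ v, jsr A * N v = ⨆ i : Fin r, N (Matrix.toEuclideanCLM (𝕜 := 𝕂) (A i) v)

/-- The tuple `A` is irreducible: no subspace of `𝕂^ι` other than `⊥` and `⊤`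
is invariant under every `A i`. -/
def IsIrreducible (A : Fin r → Matrix ι ι 𝕂) : Prop :=
  ∀ V : Submodule 𝕂 (EuclideanSpace 𝕂 ι),
    (∀ i, ∀ v ∈ V, Matrix.toEuclideanCLM (𝕜 := 𝕂) (A i) v ∈ V) → V = ⊥ ∨ V = ⊤

/-- Two words of length `n` are rotation equivalent if one is a cyclic shift of the other. -/
def RotEquiv {n : ℕ} (z w : Fin n → Fin r) : Prop :=
  ∃ k : ℕ, ∀ j : Fin n, z j = w ⟨(j.val + k) % n, Nat.mod_lt _ j.pos⟩

/-- The tuple `A` satisfies the strong finiteness hypothesis with characteristic word `ω`: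
for every Barabanov norm `N` for `A`, every word of the same length as `ω` which is not
rotation equivalent to `ω` has `N`-operator-norm product strictly less than `ϱ(𝒜)^n`. -/
def StrongFinHyp (A : Fin r → Matrix ι ι 𝕂) {n : ℕ} (ω : Fin n → Fin r) : Prop :=
  ∀ N : EuclideanSpace 𝕂 ι → ℝ, IsBarabanov A N →
    ∀ z : Fin n → Fin r, ¬ RotEquiv z ω → opNormWrt N (wordProd A z) < jsr A ^ n

/-- The tuple `A` is relatively product bounded : `ϱ(𝒜) > 0` and the set of normalised
products `ϱ(𝒜)^{-n} A_{i_n} ⋯ A_{i_1}` is bounded. -/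
def RelProdBounded (A : Fin r → Matrix ι ι 𝕂) : Prop :=
  0 < jsr A ∧ ∃ C : ℝ, ∀ (n : ℕ) (i : Fin n → Fin r), eNorm (wordProd A i) ≤ C * jsr A ^ n

/-- The limit semigroup `𝒮(𝒜) = ⋂_{m ≥ 1} closure (⋃_{n ≥ m} ϱ(𝒜)^{-n} 𝒜_n)`,
written out via the metric characterisation of the closure. -/
def limitSemigroup (A : Fin r → Matrix ι ι 𝕂) : Set (Matrix ι ι 𝕂) :=
  {B | ∀ m : ℕ, ∀ ε > (0 : ℝ), ∃ n : ℕ, m ≤ n ∧ ∃ i : Fin n → Fin r,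
    eNorm ((jsr A ^ n)⁻¹ • wordProd A i - B) < ε}

/-- The tuple `A` has the rank one property: it is relatively product bounded and every
nonzero element of the limit semigroup has rank one. -/
def RankOneProp (A : Fin r → Matrix ι ι 𝕂) : Prop :=
  RelProdBounded A ∧ ∀ B ∈ limitSemigroup A, B ≠ 0 → B.rank = 1

/-- The product `A_{i n} ⋯ A_{i 1}` along the first `n` terms of the sequence `i`
(indexed from `1`). -/
noncomputable def seqProd (A : Fin r → Matrix ι ι 𝕂) (i : ℕ → Fin r) (n : ℕ) :
    Matrix ι ι 𝕂 :=
  wordProd A fun k : Fin n => i (k.val + 1)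

/-- The unbounded agreements property: any two sequences whose normalised partial
products do not tend to zero (i.e. `limsup ‖A_{i(n)} ⋯ A_{i(1)}‖ / ϱ(𝒜)^n > 0`) contain
arbitrarily long identical blocks. -/
def UnboundedAgreements (A : Fin r → Matrix ι ι 𝕂) : Prop :=
  ∀ N : ℕ, ∀ i₁ i₂ : ℕ → Fin r,
    (∃ c > (0 : ℝ), ∀ m : ℕ, ∃ n, m ≤ n ∧ c ≤ eNorm (seqProd A i₁ n) / jsr A ^ n) →
    (∃ c > (0 : ℝ), ∀ m : ℕ, ∃ n, m ≤ n ∧ c ≤ eNorm (seqProd A i₂ n) / jsr A ^ n) →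
    ∃ n₁ n₂ : ℕ, ∀ k : ℕ, 1 ≤ k → k ≤ N → i₁ (n₁ + k) = i₂ (n₂ + k)

/-- The finiteness property: some periodic product realises the joint spectral radius,
`ρ(A_{i_n} ⋯ A_{i_1})^{1/n} = ϱ(𝒜)`. -/
def FinitenessProp (A : Fin r → Matrix ι ι 𝕂) : Prop :=
  ∃ (n : ℕ) (_ : 0 < n) (i : Fin n → Fin r),
    specRad (wordProd A i) ^ ((n : ℝ)⁻¹) = jsr A

/-- The second exterior power (second compound matrix) of a `d × d` matrix, written
in the standard basis `(e_i ∧ e_j)_{i < j}` of `⋀² 𝕂^d`. -/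
noncomputable def ext2 {d : ℕ} (A : Matrix (Fin d) (Fin d) 𝕂) :
    Matrix {p : Fin d × Fin d // p.1 < p.2} {p : Fin d × Fin d // p.1 < p.2} 𝕂 :=
  fun p q => A p.1.1 q.1.1 * A p.1.2 q.1.2 - A p.1.1 q.1.2 * A p.1.2 q.1.1

/-- The word `ω` of length `n` is a power of a shorter word. -/
def IsPowerOfShorter {n : ℕ} (ω : Fin n → Fin r) : Prop :=
  ∃ (q : ℕ) (h0 : 0 < q) (h1 : q < n), q ∣ n ∧
    ∀ j : Fin n, ω j = ω ⟨j.val % q, lt_trans (Nat.mod_lt _ h0) h1⟩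

/-- `Θ_ω(𝒜)`: the supremum of `‖A_{ω_n} ⋯ A_{ω_1}‖^{1/n}` over all Barabanov norms. -/
noncomputable def Theta {n : ℕ} (ω : Fin n → Fin r) (A : Fin r → Matrix ι ι 𝕂) : ℝ :=
  sSup {x : ℝ | ∃ N, IsBarabanov A N ∧ x = opNormWrt N (wordProd A ω) ^ ((n : ℝ)⁻¹)}

end JSRPaper

/-! The reflection `A₁ = diag(1, -1)` preserves every `ℓ^p` norm and `A₂` is `λ` times a
coordinate swap, so `max_i ‖A_i v‖_p = ‖v‖_p`: each `ℓ^p` norm is a Barabanov norm, `ϱ(𝒜) = 1`,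
`A₁` alone realises it, and the even powers `A₁^{2m} = 1` put the identity in `𝒮(𝒜)`.
Every occurrence of `A₂` contracts a product by `|λ| < 1`, so a sequence whose products do not
decay uses `A₂` only finitely often and ends in the constant sequence `A₁ A₁ ⋯`; any two such
sequences share arbitrarily long blocks. For irreducibility, `A₁` splits an invariant subspace
along the coordinate axes and `A₂` exchanges the axes. -/

namespace JSRPaper

section Products

variable {𝕂 : Type*} [RCLike 𝕂] {ι : Type*} [Fintype ι] [DecidableEq ι] {r : ℕ}

lemma eNorm_nonneg (M : Matrix ι ι 𝕂) : 0 ≤ eNorm M := norm_nonneg _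

lemma eNorm_zero : eNorm (0 : Matrix ι ι 𝕂) = 0 := by
  simp [eNorm]

lemma eNorm_one_le : eNorm (1 : Matrix ι ι 𝕂) ≤ 1 := by
  rw [eNorm, map_one]
  exact ContinuousLinearMap.norm_id_le

lemma eNorm_mul_le (M N : Matrix ι ι 𝕂) : eNorm (M * N) ≤ eNorm M * eNorm N := by
  simpa only [eNorm, map_mul] using norm_mul_le _ _

lemma eNorm_eq_of_norm_apply_eq [Nonempty ι] {M : Matrix ι ι 𝕂} {c : ℝ} (hc : 0 ≤ c)
    (hM : ∀ v, ‖Matrix.toEuclideanCLM (𝕜 := 𝕂) M v‖ = c * ‖v‖) : eNorm M = c := by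
  refine ContinuousLinearMap.opNorm_eq_of_bounds hc (fun v => (hM v).le) fun N _ hN => ?_
  obtain ⟨v, hv⟩ := exists_ne (0 : EuclideanSpace 𝕂 ι)
  exact le_of_mul_le_mul_right ((hM v).symm.le.trans (hN v)) (norm_pos_iff.2 hv)

lemma eNorm_pow_eq_one_of_isometry [Nonempty ι] {M : Matrix ι ι 𝕂}
    (hM : ∀ v, ‖Matrix.toEuclideanCLM (𝕜 := 𝕂) M v‖ = ‖v‖) (n : ℕ) : eNorm (M ^ n) = 1 := by
  refine eNorm_eq_of_norm_apply_eq zero_le_one fun v => ?_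
  rw [one_mul, map_pow]
  induction n with
  | zero => simp
  | succ n ih => rw [pow_succ', mul_apply_eq_comp, hM, ih]

lemma wordProd_succ (A : Fin r → Matrix ι ι 𝕂) {n : ℕ} (i : Fin (n + 1) → Fin r) :
    wordProd A i = A (i (Fin.last n)) * wordProd A (fun k => i k.castSucc) := by
  rw [wordProd, wordProd, List.ofFn_succ', List.concat_eq_append, List.reverse_append]
  simp

lemma wordProd_const (A : Fin r → Matrix ι ι 𝕂) (j : Fin r) (n : ℕ) :
    wordProd A (fun _ : Fin n => j) = A j ^ n := by
  induction n with
  | zero => simp [wordProd]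
  | succ n ih => rw [wordProd_succ, ih, pow_succ']

lemma eNorm_wordProd_le_one {A : Fin r → Matrix ι ι 𝕂} (hA : ∀ j, eNorm (A j) ≤ 1) {n : ℕ}
    (i : Fin n → Fin r) : eNorm (wordProd A i) ≤ 1 := by
  induction n with
  | zero => simpa [wordProd] using eNorm_one_le
  | succ n ih =>
    rw [wordProd_succ]
    exact (eNorm_mul_le _ _).trans (mul_le_one₀ (hA _) (eNorm_nonneg _) (ih _))

lemma jsr_eq_one {A : Fin r → Matrix ι ι 𝕂} (hA : ∀ j, eNorm (A j) ≤ 1) (j₀ : Fin r)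
    (hj₀ : ∀ n, eNorm (A j₀ ^ n) = 1) : jsr A = 1 := by
  have : Nonempty (Fin r) := ⟨j₀⟩
  have hsup : ∀ n : ℕ, (⨆ i : Fin n → Fin r, eNorm (wordProd A i)) = 1 := fun n =>
    le_antisymm (ciSup_le (eNorm_wordProd_le_one hA)) <| by
      simpa [wordProd_const, hj₀] using
        le_ciSup (Set.finite_range fun i : Fin n → Fin r => eNorm (wordProd A i)).bddAbove
          fun _ => j₀
  simp [jsr, hsup]

lemma specRad_eq_one {M : Matrix ι ι 𝕂} (hM : ∀ k, eNorm (M ^ k) = 1) : specRad M = 1 := by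
  simp [specRad, hM]

lemma finitenessProp_of_specRad_eq {A : Fin r → Matrix ι ι 𝕂} (j : Fin r)
    (h : specRad (A j) = jsr A) : FinitenessProp A :=
  ⟨1, one_pos, fun _ => j, by rw [wordProd_const, pow_one, Nat.cast_one, inv_one, Real.rpow_one, h]⟩

lemma one_mem_limitSemigroup {A : Fin r → Matrix ι ι 𝕂} (hjsr : jsr A = 1) {j : Fin r} {q : ℕ}
    (hq : 0 < q) (hAj : A j ^ q = 1) : 1 ∈ limitSemigroup A := by
  intro m ε hε
  refine ⟨q * m, Nat.le_mul_of_pos_left m hq, fun _ => j, ?_⟩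
  rwa [wordProd_const, hjsr, one_pow, inv_one, one_smul, pow_mul, hAj, one_pow, sub_self,
    eNorm_zero]

lemma not_rankOneProp_of_one_mem {A : Fin r → Matrix ι ι 𝕂} (hι : 1 < Fintype.card ι)
    (h : 1 ∈ limitSemigroup A) : ¬ RankOneProp A := by
  rintro ⟨-, hrank⟩
  have : Nonempty ι := Fintype.card_pos_iff.1 (by omega)
  have := hrank 1 h one_ne_zero
  rw [Matrix.rank_one] at this
  omega

lemma seqProd_succ (A : Fin r → Matrix ι ι 𝕂) (i : ℕ → Fin r) (n : ℕ) :
    seqProd A i (n + 1) = A (i (n + 1)) * seqProd A i n := by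
  rw [seqProd, wordProd_succ]
  rfl

lemma antitone_eNorm_seqProd {A : Fin r → Matrix ι ι 𝕂} (hA : ∀ j, eNorm (A j) ≤ 1)
    (i : ℕ → Fin r) : Antitone fun n => eNorm (seqProd A i n) :=
  antitone_nat_of_succ_le fun n => by
    rw [seqProd_succ]
    exact (eNorm_mul_le _ _).trans (mul_le_of_le_one_left (eNorm_nonneg _) (hA _))

lemma eventually_ne_of_frequently_le_eNorm_seqProd {A : Fin r → Matrix ι ι 𝕂}
    (hA : ∀ j, eNorm (A j) ≤ 1) {j₁ : Fin r} (hj₁ : eNorm (A j₁) < 1) {i : ℕ → Fin r} {c : ℝ}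
    (hc : 0 < c) (hfreq : ∀ m, ∃ n, m ≤ n ∧ c ≤ eNorm (seqProd A i n)) :
    ∃ M, ∀ k, M < k → i k ≠ j₁ := by
  by_contra! hinf
  have hmono := antitone_eNorm_seqProd hA i
  have hsmall : ∀ t : ℕ, ∃ n, eNorm (seqProd A i n) ≤ eNorm (A j₁) ^ t := by
    intro t
    induction t with
    | zero => exact ⟨0, by rw [pow_zero]; exact eNorm_wordProd_le_one hA _⟩
    | succ t ih =>
      obtain ⟨n, hn⟩ := ih
      obtain ⟨k, hnk, hk⟩ := hinf n
      obtain ⟨k, rfl⟩ : ∃ k', k = k' + 1 := ⟨k - 1, by omega⟩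
      refine ⟨k + 1, ?_⟩
      rw [seqProd_succ, hk, pow_succ']
      exact (eNorm_mul_le _ _).trans
        (mul_le_mul_of_nonneg_left ((hmono (by omega)).trans hn) (eNorm_nonneg _))
  obtain ⟨t, ht⟩ := exists_pow_lt_of_lt_one hc hj₁
  obtain ⟨n, hn⟩ := hsmall t
  obtain ⟨n', hnn', hn'⟩ := hfreq n
  linarith [hmono hnn']

lemma unboundedAgreements_of_eventually_eq {A : Fin r → Matrix ι ι 𝕂} (j₀ : Fin r)
    (h : ∀ i : ℕ → Fin r,
      (∃ c > (0 : ℝ), ∀ m : ℕ, ∃ n, m ≤ n ∧ c ≤ eNorm (seqProd A i n) / jsr A ^ n) →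
      ∃ M, ∀ k, M < k → i k = j₀) :
    UnboundedAgreements A := by
  intro N i₁ i₂ h₁ h₂
  obtain ⟨M₁, hM₁⟩ := h i₁ h₁
  obtain ⟨M₂, hM₂⟩ := h i₂ h₂
  exact ⟨M₁, M₂, fun k hk _ => by rw [hM₁ _ (by omega), hM₂ _ (by omega)]⟩

lemma isBarabanov_of_le {A : Fin r → Matrix ι ι 𝕂} {N : EuclideanSpace 𝕂 ι → ℝ} (hN : IsNorm N)
    (j₀ : Fin r) (heq : ∀ v, N (Matrix.toEuclideanCLM (𝕜 := 𝕂) (A j₀) v) = jsr A * N v)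
    (hle : ∀ j v, N (Matrix.toEuclideanCLM (𝕜 := 𝕂) (A j) v) ≤ jsr A * N v) :
    IsBarabanov A N := by
  have : Nonempty (Fin r) := ⟨j₀⟩
  exact ⟨hN, fun v => le_antisymm ((heq v).symm.le.trans
    (le_ciSup (f := fun j => N (Matrix.toEuclideanCLM (𝕜 := 𝕂) (A j) v))
      (Set.finite_range _).bddAbove j₀)) (ciSup_le fun j => hle j v)⟩

end Products

section LpNorm

variable {𝕂 : Type*} [RCLike 𝕂] {ι : Type*} [Fintype ι]

def lpNorm (p : ℝ) (v : EuclideanSpace 𝕂 ι) : ℝ := (∑ j, ‖v j‖ ^ p) ^ p⁻¹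

lemma lpNorm_nonneg (p : ℝ) (v : EuclideanSpace 𝕂 ι) : 0 ≤ lpNorm p v := by
  unfold lpNorm
  positivity

lemma isNorm_lpNorm {p : ℝ} (hp : 1 ≤ p) : IsNorm (lpNorm (𝕂 := 𝕂) (ι := ι) p) := by
  have : Fact (1 ≤ ENNReal.ofReal p) := ⟨by simpa using hp⟩
  have hnorm : ∀ v : EuclideanSpace 𝕂 ι,
      lpNorm p v = ‖WithLp.toLp (ENNReal.ofReal p) (WithLp.ofLp v)‖ := fun v => by
    have hp' : (ENNReal.ofReal p).toReal = p := ENNReal.toReal_ofReal (by linarith)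
    rw [PiLp.norm_eq_sum (by linarith), hp', one_div]
    rfl
  refine ⟨fun v => ?_, fun c v => ?_, fun u v => ?_⟩ <;> simp only [hnorm]
  · rw [norm_eq_zero]
    simp
  · simp [norm_smul]
  · simpa using norm_add_le _ _

lemma lpNorm_fin_two (p : ℝ) :
    (lpNorm p : EuclideanSpace 𝕂 (Fin 2) → ℝ) = fun v => (‖v 0‖ ^ p + ‖v 1‖ ^ p) ^ p⁻¹ := by
  ext v
  simp [lpNorm, Fin.sum_univ_two]

end LpNorm

section Example

variable {𝕂 : Type*} [RCLike 𝕂]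

lemma toEuclideanCLM_diagSign_apply (v : EuclideanSpace 𝕂 (Fin 2)) :
    Matrix.toEuclideanCLM (𝕜 := 𝕂) !![1, 0; 0, -1] v = !₂[v 0, -v 1] := by
  ext j
  fin_cases j <;> simp [Matrix.mulVec, dotProduct, Fin.sum_univ_two]

lemma toEuclideanCLM_antiDiag_apply (lam : 𝕂) (v : EuclideanSpace 𝕂 (Fin 2)) :
    Matrix.toEuclideanCLM (𝕜 := 𝕂) !![0, lam; lam, 0] v = lam • !₂[v 1, v 0] := by
  ext j
  fin_cases j <;> simp [Matrix.mulVec, dotProduct, Fin.sum_univ_two]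

lemma norm_toEuclideanCLM_diagSign_apply (v : EuclideanSpace 𝕂 (Fin 2)) :
    ‖Matrix.toEuclideanCLM (𝕜 := 𝕂) !![1, 0; 0, -1] v‖ = ‖v‖ := by
  simp [toEuclideanCLM_diagSign_apply, EuclideanSpace.norm_eq, Fin.sum_univ_two]

lemma norm_toEuclideanCLM_antiDiag_apply (lam : 𝕂) (v : EuclideanSpace 𝕂 (Fin 2)) :
    ‖Matrix.toEuclideanCLM (𝕜 := 𝕂) !![0, lam; lam, 0] v‖ = ‖lam‖ * ‖v‖ := by
  simp [toEuclideanCLM_antiDiag_apply, norm_smul, EuclideanSpace.norm_eq, Fin.sum_univ_two,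
    add_comm]

lemma diagSign_mul_self :
    (!![1, 0; 0, -1] : Matrix (Fin 2) (Fin 2) 𝕂) * !![1, 0; 0, -1] = 1 := by
  simp [Matrix.one_fin_two]

lemma eNorm_diagSign_pow (n : ℕ) :
    eNorm ((!![1, 0; 0, -1] : Matrix (Fin 2) (Fin 2) 𝕂) ^ n) = 1 :=
  eNorm_pow_eq_one_of_isometry norm_toEuclideanCLM_diagSign_apply n

lemma eNorm_antiDiag (lam : 𝕂) : eNorm !![0, lam; lam, 0] = ‖lam‖ :=
  eNorm_eq_of_norm_apply_eq (norm_nonneg _) (norm_toEuclideanCLM_antiDiag_apply lam)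

lemma lpNorm_toEuclideanCLM_diagSign_apply (p : ℝ) (v : EuclideanSpace 𝕂 (Fin 2)) :
    lpNorm p (Matrix.toEuclideanCLM (𝕜 := 𝕂) !![1, 0; 0, -1] v) = lpNorm p v := by
  simp [lpNorm_fin_two, toEuclideanCLM_diagSign_apply]

lemma lpNorm_toEuclideanCLM_antiDiag_apply {p : ℝ} (hp : 1 ≤ p) (lam : 𝕂)
    (v : EuclideanSpace 𝕂 (Fin 2)) :
    lpNorm p (Matrix.toEuclideanCLM (𝕜 := 𝕂) !![0, lam; lam, 0] v) = ‖lam‖ * lpNorm p v := by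
  rw [toEuclideanCLM_antiDiag_apply, (isNorm_lpNorm hp).2.1]
  simp [lpNorm_fin_two, add_comm]

lemma basis_mem_of_diagSign_invariant {V : Submodule 𝕂 (EuclideanSpace 𝕂 (Fin 2))}
    (hV : ∀ v ∈ V, Matrix.toEuclideanCLM (𝕜 := 𝕂) !![1, 0; 0, -1] v ∈ V)
    {v : EuclideanSpace 𝕂 (Fin 2)} (hvV : v ∈ V) (hv : v ≠ 0) : !₂[1, 0] ∈ V ∨ !₂[0, 1] ∈ V := by
  have hsum : v + Matrix.toEuclideanCLM (𝕜 := 𝕂) !![1, 0; 0, -1] v = (2 * v 0) • !₂[1, 0] := by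
    ext j
    fin_cases j <;> simp [toEuclideanCLM_diagSign_apply, two_mul]
  have hdiff : v - Matrix.toEuclideanCLM (𝕜 := 𝕂) !![1, 0; 0, -1] v = (2 * v 1) • !₂[0, 1] := by
    ext j
    fin_cases j <;> simp [toEuclideanCLM_diagSign_apply, two_mul]
  by_cases h0 : v 0 = 0
  · have h1 : v 1 ≠ 0 := fun h1 => hv (by ext j; fin_cases j <;> assumption)
    right
    rw [← V.smul_mem_iff (mul_ne_zero two_ne_zero h1), ← hdiff]
    exact V.sub_mem hvV (hV v hvV)
  · left
    rw [← V.smul_mem_iff (mul_ne_zero two_ne_zero h0), ← hsum]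
    exact V.add_mem hvV (hV v hvV)

def diagSwapPair (lam : 𝕂) : Fin 2 → Matrix (Fin 2) (Fin 2) 𝕂 :=
  ![!![1, 0; 0, -1], !![0, lam; lam, 0]]

variable {lam : 𝕂}

@[simp] lemma diagSwapPair_zero : diagSwapPair lam 0 = !![1, 0; 0, -1] := rfl

@[simp] lemma diagSwapPair_one : diagSwapPair lam 1 = !![0, lam; lam, 0] := rfl

lemma eNorm_diagSwapPair_le_one (hlam : ‖lam‖ ≤ 1) (j : Fin 2) :
    eNorm (diagSwapPair lam j) ≤ 1 := by
  fin_cases j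
  · simpa using (eNorm_diagSign_pow (𝕂 := 𝕂) 1).le
  · simpa [eNorm_antiDiag]

lemma jsr_diagSwapPair (hlam : ‖lam‖ ≤ 1) : jsr (diagSwapPair lam) = 1 :=
  jsr_eq_one (eNorm_diagSwapPair_le_one hlam) 0 eNorm_diagSign_pow

lemma isIrreducible_diagSwapPair (hlam : lam ≠ 0) : IsIrreducible (diagSwapPair lam) := by
  intro V hV
  have hswap₀ : Matrix.toEuclideanCLM (𝕜 := 𝕂) (diagSwapPair lam 1) !₂[1, 0] = lam • !₂[0, 1] := by
    rw [diagSwapPair_one, toEuclideanCLM_antiDiag_apply]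
    simp
  have hswap₁ : Matrix.toEuclideanCLM (𝕜 := 𝕂) (diagSwapPair lam 1) !₂[0, 1] = lam • !₂[1, 0] := by
    rw [diagSwapPair_one, toEuclideanCLM_antiDiag_apply]
    simp
  have hbasis : !₂[1, 0] ∈ V ↔ !₂[0, 1] ∈ V :=
    ⟨fun h => (V.smul_mem_iff hlam).1 (hswap₀ ▸ hV 1 _ h),
      fun h => (V.smul_mem_iff hlam).1 (hswap₁ ▸ hV 1 _ h)⟩
  refine or_iff_not_imp_left.2 fun hbot => eq_top_iff.2 fun w _ => ?_
  obtain ⟨v, hvV, hv⟩ := Submodule.exists_mem_ne_zero_of_ne_bot hbot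
  have he : !₂[1, 0] ∈ V ∧ !₂[0, 1] ∈ V := by
    rcases basis_mem_of_diagSign_invariant (hV 0) hvV hv with h | h
    exacts [⟨h, hbasis.1 h⟩, ⟨hbasis.2 h, h⟩]
  have hw : w = w 0 • !₂[1, 0] + w 1 • !₂[0, 1] := by
    ext j
    fin_cases j <;> simp
  rw [hw]
  exact V.add_mem (V.smul_mem _ he.1) (V.smul_mem _ he.2)

lemma isBarabanov_lpNorm_diagSwapPair (hlam : ‖lam‖ ≤ 1) {p : ℝ} (hp : 1 ≤ p) :
    IsBarabanov (diagSwapPair lam) (lpNorm p) := by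
  refine isBarabanov_of_le (isNorm_lpNorm hp) 0 (fun v => ?_) fun j v => ?_
  · rw [jsr_diagSwapPair hlam, one_mul, diagSwapPair_zero, lpNorm_toEuclideanCLM_diagSign_apply]
  · rw [jsr_diagSwapPair hlam, one_mul]
    fin_cases j
    · simp [lpNorm_toEuclideanCLM_diagSign_apply]
    · simpa [lpNorm_toEuclideanCLM_antiDiag_apply hp] using
        mul_le_of_le_one_left (lpNorm_nonneg p v) hlam

lemma unboundedAgreements_diagSwapPair (hlam : ‖lam‖ < 1) :
    UnboundedAgreements (diagSwapPair lam) := by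
  refine unboundedAgreements_of_eventually_eq 0 fun i ⟨c, hc, hfreq⟩ => ?_
  simp only [jsr_diagSwapPair hlam.le, one_pow, div_one] at hfreq
  obtain ⟨M, hM⟩ := eventually_ne_of_frequently_le_eNorm_seqProd
    (eNorm_diagSwapPair_le_one hlam.le) (j₁ := 1) (by simpa [eNorm_antiDiag]) hc hfreq
  exact ⟨M, fun k hk => by have := hM k hk; omega⟩

lemma not_exists_lpNorm_two_eq_mul_lpNorm_one :
    ¬ ∃ c > (0 : ℝ), ∀ v : EuclideanSpace 𝕂 (Fin 2), lpNorm 2 v = c * lpNorm 1 v := by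
  rintro ⟨c, -, hc⟩
  have h₀ := hc !₂[1, 0]
  have h₁ := hc !₂[1, 1]
  simp only [lpNorm_fin_two] at h₀ h₁
  norm_num at h₀ h₁
  have hlt : (2 : ℝ) ^ (1 / 2 : ℝ) < 2 ^ (1 : ℝ) :=
    Real.rpow_lt_rpow_of_exponent_lt one_lt_two (by norm_num)
  rw [h₁, ← h₀, Real.rpow_one] at hlt
  linarith

end Example

end JSRPaper

open JSRPaper in
/-- **Example 3.** For `A₁ = [[1,0],[0,-1]]`, `A₂ = [[0,λ],[λ,0]]` with `0 < |λ| < 1`,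
the pair `𝒜 = (A₁, A₂)` is irreducible with `ϱ(𝒜) = 1`, has the unbounded agreements
and finiteness properties, the identity matrix lies in the limit semigroup so the rank
one property fails, every `ℓ^p`-norm (`p ≥ 1`) is a Barabanov norm, and `𝒜` has
non-proportional Barabanov norms. -/
theorem stmt_15 {𝕂 : Type*} [RCLike 𝕂] (lam : 𝕂) (h0 : 0 < ‖lam‖) (h1 : ‖lam‖ < 1)
    (A : Fin 2 → Matrix (Fin 2) (Fin 2) 𝕂)
    (hA : A = ![!![1, 0; 0, -1], !![0, lam; lam, 0]]) :
    IsIrreducible A ∧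
    jsr A = 1 ∧
    UnboundedAgreements A ∧
    FinitenessProp A ∧
    (1 : Matrix (Fin 2) (Fin 2) 𝕂) ∈ limitSemigroup A ∧
    ¬ RankOneProp A ∧
    (∀ p : ℝ, 1 ≤ p →
      IsBarabanov A (fun v : EuclideanSpace 𝕂 (Fin 2) => (‖v 0‖ ^ p + ‖v 1‖ ^ p) ^ p⁻¹)) ∧
    (∃ N₁ N₂ : EuclideanSpace 𝕂 (Fin 2) → ℝ, IsBarabanov A N₁ ∧ IsBarabanov A N₂ ∧
      ¬ ∃ c > (0 : ℝ), ∀ v, N₂ v = c * N₁ v) := by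
  obtain rfl : A = diagSwapPair lam := hA
  have hjsr := jsr_diagSwapPair h1.le
  have hone : (1 : Matrix (Fin 2) (Fin 2) 𝕂) ∈ limitSemigroup (diagSwapPair lam) :=
    one_mem_limitSemigroup hjsr (j := 0) two_pos (by rw [sq, diagSwapPair_zero, diagSign_mul_self])
  refine ⟨isIrreducible_diagSwapPair (norm_pos_iff.1 h0), hjsr, unboundedAgreements_diagSwapPair h1,
    finitenessProp_of_specRad_eq 0 ?_, hone, not_rankOneProp_of_one_mem (by simp) hone,
    fun p hp => lpNorm_fin_two (𝕂 := 𝕂) p ▸ isBarabanov_lpNorm_diagSwapPair h1.le hp,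
    lpNorm 1, lpNorm 2, isBarabanov_lpNorm_diagSwapPair h1.le le_rfl,
    isBarabanov_lpNorm_diagSwapPair h1.le one_le_two, not_exists_lpNorm_two_eq_mul_lpNorm_one⟩
  rw [hjsr, diagSwapPair_zero, specRad_eq_one eNorm_diagSign_pow]
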